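/- arXiv:2008.07455 — 2 statements merged into one kernel-verified Lean document; each statement's English description precedes it below -/
import Mathlib

section
/- Gathering is unsolvable in 1-interval connected unicyclic graphs: for every deterministic algorithm executed by k = 2 identical anonymous agents, and every underlying unicyclic graph whose unique cycle has length c > 3, there exist initial positions of the two agents (in particular, positions in the trees attached to two different cycle vertices) and a 1-interval connected dynamic graph sequence on this underlying graph such that, in the resulting execution, the two agents are never located at the same node. -/
/-!
Statement 0: Gathering is unsolvable in 1-interval connected unicyclic graphs.

We model a static network as a finite connected simple graph with a port numbering,
a dynamic graph as a sequence of spanning subgraphs of the underlying graph,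
and an agent algorithm as a deterministic automaton whose step function sees the
degree of its node, the number of agents there, and whether it was blocked in the
previous round, and outputs a new state together with an optional port to move through.
-/

open SimpleGraph

open scoped Classical

/-- A port numbering of a graph: at every vertex `v`, a bijection between the
port numbers `0, …, δ(v) - 1` and the neighbors of `v`. -/
structure PortNumbering {V : Type} [Fintype V] [DecidableEq V]
    (G : SimpleGraph V) [DecidableRel G.Adj] where
  toFun : ∀ v : V, Fin (G.degree v) ≃ G.neighborSet v

/-- The node reached from `v` by moving through port `p` (none if `p` is not a valid port). -/
def portTarget {V : Type} [Fintype V] [DecidableEq V]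
    (G : SimpleGraph V) [DecidableRel G.Adj] (pn : PortNumbering G)
    (v : V) (p : ℕ) : Option V :=
  if h : p < G.degree v then some ((pn.toFun v ⟨p, h⟩ : G.neighborSet v) : V) else none

/-- A deterministic algorithm for identical anonymous agents.  The step function receives
the current state, the degree of the current node, the number of agents at the current
node (strong multiplicity detection), and whether the agent was blocked in the previous
round; it outputs the new state and `some p` to attempt to move through port `p`
(`none` to stay put). -/
structure Algorithm : Type 1 where
  State : Type
  init : State
  step : State → ℕ → ℕ → Bool → State × Option ℕ

/-- `Execution G pn Dyn Alg start pos st blk` says that `pos`, `st`, `blk` are the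
position, state and blocked-flag traces of `k` identical anonymous agents running the
deterministic algorithm `Alg` on the dynamic graph `Dyn` over the underlying graph `G`
with port numbering `pn`, started at the nodes `start`.  An agent that chooses a port
whose edge is disabled by the scheduler in the current round is blocked and stays put. -/
structure Execution {V : Type} [Fintype V] [DecidableEq V]
    (G : SimpleGraph V) [DecidableRel G.Adj] (pn : PortNumbering G)
    (Dyn : ℕ → SimpleGraph V) (Alg : Algorithm)
    {k : ℕ} (start : Fin k → V)
    (pos : Fin k → ℕ → V) (st : Fin k → ℕ → Alg.State)
    (blk : Fin k → ℕ → Bool) : Prop where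
  init_pos : ∀ a, pos a 0 = start a
  init_st : ∀ a, st a 0 = Alg.init
  init_blk : ∀ a, blk a 0 = false
  step_st : ∀ a t,
    st a (t + 1) =
      (Alg.step (st a t) (G.degree (pos a t))
        ((Finset.univ.filter fun b => pos b t = pos a t).card) (blk a t)).1
  step_move : ∀ a t,
    (match (Alg.step (st a t) (G.degree (pos a t))
        ((Finset.univ.filter fun b => pos b t = pos a t).card) (blk a t)).2 with
     | none => pos a (t + 1) = pos a t ∧ blk a (t + 1) = false
     | some p =>
        match portTarget G pn (pos a t) p with
        | none => pos a (t + 1) = pos a t ∧ blk a (t + 1) = false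
        | some w =>
          if (Dyn t).Adj (pos a t) w then pos a (t + 1) = w ∧ blk a (t + 1) = false
          else pos a (t + 1) = pos a t ∧ blk a (t + 1) = true)

/-- A unicyclic graph: connected with as many edges as vertices. -/
def Unicyclic {V : Type} [Fintype V] [DecidableEq V]
    (G : SimpleGraph V) [DecidableRel G.Adj] : Prop :=
  G.Connected ∧ G.edgeFinset.card = Fintype.card V


/-!
Cut the unique cycle at two of its edges. A unicyclic graph has as many edges as vertices,
so what remains is disconnected; colour the vertices by the side of this cut they lie on.
Every edge joining the two colours is one of the two cut edges, hence lies on the cycle and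
is not a bridge. Start the agents on different colours. Since the algorithm is deterministic,
the scheduler can compute where each agent is about to go. If both destinations have the
same colour, the agents' current colours differ, so exactly one of them is about to cross; the
scheduler removes that single edge, which keeps the graph connected. Hence the two agents
never share a colour, let alone a node.
-/

lemma SimpleGraph.Walk.IsCycle.exists_ne_mem_edges {V : Type} [DecidableEq V]
    {G : SimpleGraph V} {v : V} {c : G.Walk v v} (hc : c.IsCycle) :
    ∃ e₁ ∈ c.edges, ∃ e₂ ∈ c.edges, e₁ ≠ e₂ := by
  have hcard : 1 < c.edges.toFinset.card := by
    rw [List.toFinset_card_of_nodup hc.edges_nodup, Walk.length_edges]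
    linarith [hc.three_le_length]
  simpa using Finset.one_lt_card.1 hcard

section Cut

variable {V : Type} [Fintype V] [DecidableEq V] {G : SimpleGraph V} [DecidableRel G.Adj]

lemma Unicyclic.not_connected_deleteEdges_pair (hU : Unicyclic G) {e₁ e₂ : Sym2 V}
    (he₁ : e₁ ∈ G.edgeSet) (he₂ : e₂ ∈ G.edgeSet) (hne : e₁ ≠ e₂) :
    ¬ (G.deleteEdges {e₁, e₂}).Connected := by
  intro hconn
  have hsub : ({e₁, e₂} : Set (Sym2 V)) ⊆ G.edgeSet :=
    Set.insert_subset he₁ (Set.singleton_subset_iff.2 he₂)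
  have hcard : G.edgeSet.ncard = Fintype.card V := by
    rw [Set.ncard_eq_toFinset_card']; exact hU.2
  have htwo : 2 ≤ G.edgeSet.ncard := Set.ncard_pair hne ▸ Set.ncard_le_ncard hsub
  have := hconn.card_vert_le_card_edgeSet_add_one
  rw [edgeSet_deleteEdges, Nat.card_coe_set_eq, Set.ncard_sdiff hsub, Set.ncard_pair hne,
    Nat.card_eq_fintype_card] at this
  omega

lemma Unicyclic.exists_coloring_not_isBridge (hU : Unicyclic G) {v : V} {c : G.Walk v v}
    (hc : c.IsCycle) :
    ∃ φ : V → Bool, (∃ u w, φ u ≠ φ w) ∧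
      ∀ u w, G.Adj u w → φ u ≠ φ w → ¬ G.IsBridge s(u, w) := by
  obtain ⟨e₁, he₁, e₂, he₂, hne⟩ := hc.exists_ne_mem_edges
  set H := G.deleteEdges {e₁, e₂}
  obtain ⟨u₀, w₀, hu₀w₀⟩ : ∃ u₀ w₀, ¬ H.Reachable u₀ w₀ := by
    by_contra! h
    have : Nonempty V := ⟨v⟩
    exact hU.not_connected_deleteEdges_pair (c.edges_subset_edgeSet he₁)
      (c.edges_subset_edgeSet he₂) hne ⟨h⟩
  refine ⟨fun x => H.Reachable u₀ x, ⟨u₀, w₀, by simpa using hu₀w₀⟩, fun u w huw hφ => ?_⟩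
  have hcut : s(u, w) = e₁ ∨ s(u, w) = e₂ := by
    by_contra! h
    have hH : H.Adj u w := deleteEdges_adj.2 ⟨huw, by simpa using h⟩
    exact hφ (by simpa using ⟨fun h => h.trans hH.reachable, fun h => h.trans hH.symm.reachable⟩)
  rcases hcut with h | h <;> rw [h] <;> intro hb
  · exact hb.notMem_edges_of_isCycle hc he₁
  · exact hb.notMem_edges_of_isCycle hc he₂

end Cut

@[ext]
structure Config (V : Type) (Alg : Algorithm) (k : ℕ) where
  pos : Fin k → V
  state : Fin k → Alg.State
  blocked : Fin k → Bool

/-- New position and blocked flag after an attempt (`none`: no attempt) to move from `v`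
over the edges of `H`. -/
noncomputable def moveOutcome {V : Type} (H : SimpleGraph V) (v : V) : Option V → V × Bool
  | none => (v, false)
  | some w => if H.Adj v w then (w, false) else (v, true)

namespace Config

variable {V : Type} [Fintype V] [DecidableEq V] {G : SimpleGraph V} [DecidableRel G.Adj]
  (pn : PortNumbering G) {Alg : Algorithm} {k : ℕ}

def initial (start : Fin k → V) : Config V Alg k :=
  ⟨start, fun _ => Alg.init, fun _ => false⟩

variable (G) in
def output (c : Config V Alg k) (a : Fin k) :
    Alg.State × Option ℕ :=
  Alg.step (c.state a) (G.degree (c.pos a))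
    ((Finset.univ.filter fun b => c.pos b = c.pos a).card) (c.blocked a)

def intent (c : Config V Alg k) (a : Fin k) : Option V :=
  (c.output G a).2.bind (portTarget G pn (c.pos a))

def dest (c : Config V Alg k) (a : Fin k) : V :=
  (c.intent pn a).getD (c.pos a)

noncomputable def next (H : SimpleGraph V) (c : Config V Alg k) : Config V Alg k where
  pos a := (moveOutcome H (c.pos a) (c.intent pn a)).1
  state a := (c.output G a).1
  blocked a := (moveOutcome H (c.pos a) (c.intent pn a)).2

/-- The execution driven by a scheduler that picks each round's graph from the current
configuration. -/
noncomputable def run (A : Config V Alg k → SimpleGraph V) (start : Fin k → V) :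
    ℕ → Config V Alg k
  | 0 => initial start
  | t + 1 => (run A start t).next pn (A (run A start t))

variable {pn} {c : Config V Alg k} {a : Fin k}

lemma adj_of_intent_eq_some {w : V} (h : c.intent pn a = some w) : G.Adj (c.pos a) w := by
  obtain ⟨p, -, hp⟩ := Option.bind_eq_some_iff.1 h
  unfold portTarget at hp
  split at hp
  · cases hp; exact Subtype.prop _
  · cases hp

lemma adj_dest_of_ne (h : c.dest pn a ≠ c.pos a) : G.Adj (c.pos a) (c.dest pn a) := by
  unfold dest at *
  cases hi : c.intent pn a with
  | none => simp [hi] at h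
  | some w => exact adj_of_intent_eq_some hi

lemma pos_next (H : SimpleGraph V) :
    (c.next pn H).pos a = (moveOutcome H (c.pos a) (c.intent pn a)).1 := rfl

lemma pos_next_eq_dest_or_eq_pos (H : SimpleGraph V) :
    (c.next pn H).pos a = c.dest pn a ∨ (c.next pn H).pos a = c.pos a := by
  rw [pos_next, dest]
  rcases c.intent pn a with _ | w
  · simp [moveOutcome]
  · by_cases h : H.Adj (c.pos a) w <;> simp [moveOutcome, h]

lemma pos_next_of_not_adj {H : SimpleGraph V} (h : ¬ H.Adj (c.pos a) (c.dest pn a)) :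
    (c.next pn H).pos a = c.pos a := by
  rw [dest] at h
  rw [pos_next]
  rcases hi : c.intent pn a with _ | w
  · rfl
  · simp_all [moveOutcome]

lemma pos_next_self : (c.next pn G).pos a = c.dest pn a := by
  rw [pos_next, dest]
  rcases hi : c.intent pn a with _ | w
  · rfl
  · simp [moveOutcome, adj_of_intent_eq_some hi]

end Config

open Config

def snapshot {V : Type} {Alg : Algorithm} {k : ℕ} (pos : Fin k → ℕ → V)
    (st : Fin k → ℕ → Alg.State) (blk : Fin k → ℕ → Bool) (t : ℕ) : Config V Alg k :=
  ⟨(pos · t), (st · t), (blk · t)⟩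

namespace Execution

variable {V : Type} [Fintype V] [DecidableEq V] {G : SimpleGraph V} [DecidableRel G.Adj]
  {pn : PortNumbering G} {Dyn : ℕ → SimpleGraph V} {Alg : Algorithm} {k : ℕ}
  {start : Fin k → V} {pos : Fin k → ℕ → V} {st : Fin k → ℕ → Alg.State}
  {blk : Fin k → ℕ → Bool}

lemma snapshot_succ (hE : Execution G pn Dyn Alg start pos st blk) (t : ℕ) :
    snapshot pos st blk (t + 1) = (snapshot pos st blk t).next pn (Dyn t) := by
  have hmove : ∀ a, (pos a (t + 1), blk a (t + 1)) =
      moveOutcome (Dyn t) (pos a t) ((snapshot pos st blk t).intent pn a) := by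
    intro a
    have h := hE.step_move a t
    -- `simp` cannot rewrite under `snapshot` inside the `Fintype` instance of `degree`
    change _ = moveOutcome _ _ ((Alg.step (st a t) (G.degree (pos a t))
        ((Finset.univ.filter fun b => pos b t = pos a t).card) (blk a t)).2.bind
        (portTarget G pn (pos a t)))
    generalize (Alg.step _ _ _ _).2 = o at h ⊢
    rcases o with _ | p
    · simp [h, moveOutcome]
    dsimp only [Option.bind_some] at h ⊢
    generalize portTarget G pn (pos a t) p = o at h ⊢
    rcases o with _ | w
    · simp [h, moveOutcome]
    · by_cases hadj : (Dyn t).Adj (pos a t) w <;> simp_all [moveOutcome]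
  ext a
  · exact congrArg Prod.fst (hmove a)
  · exact hE.step_st a t
  · exact congrArg Prod.snd (hmove a)

lemma snapshot_eq_run {A : Config V Alg k → SimpleGraph V}
    (hE : Execution G pn (fun t => A (run pn A start t)) Alg start pos st blk) (t : ℕ) :
    snapshot pos st blk t = run pn A start t := by
  induction t with
  | zero => ext a <;> simp [snapshot, run, initial, hE.init_pos, hE.init_st, hE.init_blk]
  | succ t ih => rw [hE.snapshot_succ, ih, run]

end Execution

namespace Config

variable {V : Type} [Fintype V] [DecidableEq V] {G : SimpleGraph V} [DecidableRel G.Adj]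
  (pn : PortNumbering G) {Alg : Algorithm} (φ : V → Bool)

noncomputable def separatingScheduler (c : Config V Alg 2) : SimpleGraph V :=
  if φ (c.dest pn 0) = φ (c.dest pn 1) then
    if φ (c.pos 0) ≠ φ (c.dest pn 0) then G.deleteEdges {s(c.pos 0, c.dest pn 0)}
    else if φ (c.pos 1) ≠ φ (c.dest pn 1) then G.deleteEdges {s(c.pos 1, c.dest pn 1)}
    else G
  else G

variable {pn φ}

lemma separatingScheduler_le (c : Config V Alg 2) : c.separatingScheduler pn φ ≤ G := by
  unfold separatingScheduler
  split_ifs <;> first | exact le_rfl | exact deleteEdges_le _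

lemma separatingScheduler_connected (hG : G.Connected)
    (hφ : ∀ u w, G.Adj u w → φ u ≠ φ w → ¬ G.IsBridge s(u, w)) (c : Config V Alg 2) :
    (c.separatingScheduler pn φ).Connected := by
  have hcut : ∀ a, φ (c.pos a) ≠ φ (c.dest pn a) →
      (G.deleteEdges {s(c.pos a, c.dest pn a)}).Connected := fun a ha =>
    hG.connected_delete_edge_of_not_isBridge
      (hφ _ _ (adj_dest_of_ne fun h => ha (by rw [h])) ha)
  unfold separatingScheduler
  split_ifs with _ h₀ h₁
  exacts [hcut 0 h₀, hcut 1 h₁, hG, hG]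

lemma separated_next {c : Config V Alg 2} (hc : φ (c.pos 0) ≠ φ (c.pos 1)) :
    φ ((c.next pn (c.separatingScheduler pn φ)).pos 0) ≠
      φ ((c.next pn (c.separatingScheduler pn φ)).pos 1) := by
  have h₀ := pos_next_eq_dest_or_eq_pos (pn := pn) (c := c) (a := 0) (c.separatingScheduler pn φ)
  have h₁ := pos_next_eq_dest_or_eq_pos (pn := pn) (c := c) (a := 1) (c.separatingScheduler pn φ)
  have hblock : ∀ a, (c.next pn (G.deleteEdges {s(c.pos a, c.dest pn a)})).pos a = c.pos a :=
    fun a => pos_next_of_not_adj (by simp)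
  unfold separatingScheduler at h₀ h₁ ⊢
  split_ifs at h₀ h₁ ⊢ with hd hc₀ hc₁
  · rw [hblock]; rcases h₁ with h | h <;> rw [h] <;> grind
  · rw [hblock]; rcases h₀ with h | h <;> rw [h] <;> grind
  · rcases h₀ with h | h <;> rcases h₁ with h' | h' <;> rw [h, h'] <;> grind
  · rw [pos_next_self, pos_next_self]; exact hd

lemma separated_run_separatingScheduler {start : Fin 2 → V}
    (hstart : φ (start 0) ≠ φ (start 1)) (t : ℕ) :
    φ ((run pn (separatingScheduler (Alg := Alg) pn φ) start t).pos 0) ≠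
      φ ((run pn (separatingScheduler (Alg := Alg) pn φ) start t).pos 1) := by
  induction t with
  | zero => exact hstart
  | succ t ih => exact separated_next ih

end Config

theorem gathering_unsolvable_in_unicyclic_general
    {V : Type} [Fintype V] [DecidableEq V]
    (G : SimpleGraph V) [DecidableRel G.Adj] (pn : PortNumbering G)
    (hU : Unicyclic G)
    {v : V} (cyc : G.Walk v v) (hcyc : cyc.IsCycle)
    (Alg : Algorithm) :
    ∃ start : Fin 2 → V, Function.Injective start ∧
      ∃ Dyn : ℕ → SimpleGraph V,
        (∀ t, Dyn t ≤ G) ∧ (∀ t, (Dyn t).Connected) ∧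
        ∀ (pos : Fin 2 → ℕ → V) (st : Fin 2 → ℕ → Alg.State) (blk : Fin 2 → ℕ → Bool),
          Execution G pn Dyn Alg start pos st blk →
          ∀ t : ℕ, pos 0 t ≠ pos 1 t := by
  obtain ⟨φ, ⟨u, w, huw⟩, hφ⟩ := hU.exists_coloring_not_isBridge hcyc
  let A : Config V Alg 2 → SimpleGraph V := separatingScheduler pn φ
  refine ⟨![u, w], injective_pair_iff_ne.2 (ne_of_apply_ne φ huw),
    fun t => A (run pn A ![u, w] t), fun t => separatingScheduler_le _,
    fun t => separatingScheduler_connected hU.1 hφ _, fun pos st blk hE t hmeet => ?_⟩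
  have hsep := separated_run_separatingScheduler (pn := pn) (Alg := Alg) (start := ![u, w]) huw t
  rw [← hE.snapshot_eq_run] at hsep
  exact hsep (congrArg φ hmeet)

/-- Gathering is unsolvable in 1-interval connected unicyclic graphs:
for every deterministic algorithm run by `k = 2` identical anonymous agents, and every
underlying unicyclic graph whose unique cycle has length `> 3`, there exist distinct
initial positions of the two agents and a 1-interval connected dynamic graph sequence
on this underlying graph such that, in the resulting execution, the two agents are
never located at the same node. -/
theorem gathering_unsolvable_in_unicyclic
    {V : Type} [Fintype V] [DecidableEq V]
    (G : SimpleGraph V) [DecidableRel G.Adj] (pn : PortNumbering G)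
    (hU : Unicyclic G)
    {v : V} (cyc : G.Walk v v) (hcyc : cyc.IsCycle) (hlen : 3 < cyc.length)
    (Alg : Algorithm) :
    ∃ start : Fin 2 → V, Function.Injective start ∧
      ∃ Dyn : ℕ → SimpleGraph V,
        (∀ t, Dyn t ≤ G) ∧ (∀ t, (Dyn t).Connected) ∧
        ∀ (pos : Fin 2 → ℕ → V) (st : Fin 2 → ℕ → Alg.State) (blk : Fin 2 → ℕ → Bool),
          Execution G pn Dyn Alg start pos st blk →
          ∀ t : ℕ, pos 0 t ≠ pos 1 t :=
  gathering_unsolvable_in_unicyclic_general G pn hU cyc hcyc Alg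
end

section
/- During phase 1 of the weak-gathering algorithm, the distance of each agent's pebble to the cycle is non-increasing: if d_t(p_α, C) denotes the shortest-path distance in the underlying unicyclic graph between the pebble p_α of agent α and the nearest node of the unique cycle C at round t, then the sequence {d_t(p_α, C)}_{t ≥ 0} is decreasing, i.e., d_t(p_α, C) ≥ d_{t+1}(p_α, C) for all t ≥ 0; moreover every time agent α moves its pebble, the pebble moves strictly closer to C, and eventually the pebble reaches a node of C. -/
/-!
Marks never reach the cycle, because every cycle node always has its two cycle neighbours
unmarked. The driving invariant is that every unmarked neighbour of a marked node is strictly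
closer to the cycle: when a node `u` becomes marked, a neighbour `w₀` of `u` closer to the cycle
cannot already be marked (by the invariant, `u` would then be closer than `w₀`), so `w₀` is the
only unmarked neighbour `u` can have. A pebble only moves from a marked node to an unmarked
neighbour, so every move decreases its distance, and a non-increasing sequence of naturals that
keeps decreasing while positive reaches `0`.
-/

open SimpleGraph

/-- Shortest-path distance from a node to the set `C` of cycle nodes. -/
noncomputable def distToCycle {V : Type} (G : SimpleGraph V) (C : Set V) (x : V) : ℕ :=
  sInf {d : ℕ | ∃ c ∈ C, G.dist x c = d}

theorem Nat.exists_eq_zero_of_antitone_of_exists_lt {f : ℕ → ℕ} (hf : Antitone f)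
    (hlt : ∀ t, f t ≠ 0 → ∃ t' ≥ t, f (t' + 1) < f t') : ∃ t, f t = 0 := by
  suffices ∀ d t, f t ≤ d → ∃ s, f s = 0 from this _ 0 le_rfl
  intro d
  induction d with
  | zero => exact fun t ht => ⟨t, Nat.le_zero.mp ht⟩
  | succ d ih =>
    intro t ht
    by_cases h0 : f t = 0
    · exact ⟨t, h0⟩
    obtain ⟨t', htt', hdrop⟩ := hlt t h0
    exact ih (t' + 1) (by have := hf htt'; omega)

namespace SimpleGraph

variable {V : Type} {G : SimpleGraph V}

theorem Walk.IsCycle.exists_adj_ne_of_mem_support [DecidableEq V] {v u : V} {c : G.Walk v v}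
    (hc : c.IsCycle) (hu : u ∈ c.support) :
    ∃ a ∈ c.support, ∃ b ∈ c.support, a ≠ b ∧ G.Adj u a ∧ G.Adj u b := by
  have hr := hc.rotate hu
  exact ⟨_, (c.mem_support_rotate_iff u hu).1 (Walk.getVert_mem_support _ _),
    _, (c.mem_support_rotate_iff u hu).1 (Walk.getVert_mem_support _ _),
    hr.snd_ne_penultimate, Walk.adj_snd hr.not_nil, (Walk.adj_penultimate hr.not_nil).symm⟩

end SimpleGraph

section distToCycle

variable {V : Type} {G : SimpleGraph V} {C : Set V}

theorem exists_dist_eq_distToCycle (hC : C.Nonempty) (x : V) :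
    ∃ c ∈ C, G.dist x c = distToCycle G C x :=
  Nat.sInf_mem (hC.image (G.dist x))

theorem distToCycle_le_dist (x : V) {c : V} (hc : c ∈ C) : distToCycle G C x ≤ G.dist x c :=
  Nat.sInf_le ⟨c, hc, rfl⟩

theorem distToCycle_eq_zero_iff (hG : G.Connected) (hC : C.Nonempty) {x : V} :
    distToCycle G C x = 0 ↔ x ∈ C := by
  refine ⟨fun h0 => ?_, fun hx => Nat.le_zero.mp (dist_self (G := G) ▸ distToCycle_le_dist x hx)⟩
  obtain ⟨c, hc, hd⟩ := exists_dist_eq_distToCycle (G := G) hC x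
  rwa [(hG.dist_eq_zero_iff).mp (hd.trans h0)]

theorem exists_adj_distToCycle_lt (hG : G.Connected) (hC : C.Nonempty) {x : V} (hx : x ∉ C) :
    ∃ w, G.Adj x w ∧ distToCycle G C w < distToCycle G C x := by
  obtain ⟨c, hc, hd⟩ := exists_dist_eq_distToCycle (G := G) hC x
  obtain ⟨p, hp⟩ := hG.exists_walk_length_eq_dist x c
  have hpos : 0 < distToCycle G C x :=
    Nat.pos_of_ne_zero fun h => hx ((distToCycle_eq_zero_iff hG hC).mp h)
  have hnil : ¬ p.Nil := by rw [Walk.not_nil_iff_lt_length]; omega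
  refine ⟨p.snd, p.adj_snd hnil, ?_⟩
  calc distToCycle G C p.snd ≤ G.dist p.snd c := distToCycle_le_dist _ hc
    _ ≤ p.tail.length := dist_le _
    _ < distToCycle G C x := by have := p.length_tail_add_one hnil; omega

end distToCycle

namespace SimpleGraph

variable {V : Type} [Fintype V] [DecidableEq V] {G : SimpleGraph V} [DecidableRel G.Adj]

/-- `marked t` is the set of nodes an agent has marked `∉C` by round `t` of phase 1. -/
structure IsLeafPruning (G : SimpleGraph V) [DecidableRel G.Adj] (marked : ℕ → Finset V) :
    Prop where
  zero : marked 0 = ∅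
  mono : ∀ t, marked t ⊆ marked (t + 1)
  card_unmarked_le_one : ∀ t u, u ∈ marked (t + 1) → u ∉ marked t →
    ((G.neighborFinset u).filter (fun w => w ∉ marked t)).card ≤ 1

namespace IsLeafPruning

variable {marked : ℕ → Finset V} (hM : G.IsLeafPruning marked)
include hM

theorem eq_of_adj_of_notMem {t : ℕ} {u a b : V} (hu : u ∈ marked (t + 1)) (hu' : u ∉ marked t)
    (ha : G.Adj u a) (ha' : a ∉ marked t) (hb : G.Adj u b) (hb' : b ∉ marked t) : a = b :=
  Finset.card_le_one.mp (hM.card_unmarked_le_one t u hu hu') a (by simp [ha, ha'])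
    b (by simp [hb, hb'])

theorem notMem_of_forall_exists_adj_ne {C : Set V}
    (hC : ∀ u ∈ C, ∃ a ∈ C, ∃ b ∈ C, a ≠ b ∧ G.Adj u a ∧ G.Adj u b) {t : ℕ} {u : V}
    (hu : u ∈ marked t) : u ∉ C := by
  induction t generalizing u with
  | zero => simp [hM.zero] at hu
  | succ t ih =>
    intro huC
    by_cases hold : u ∈ marked t
    · exact ih hold huC
    obtain ⟨a, haC, b, hbC, hab, ha, hb⟩ := hC u huC
    exact hab (hM.eq_of_adj_of_notMem hu hold ha (fun h => ih h haC) hb (fun h => ih h hbC))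

theorem distToCycle_lt (hG : G.Connected) {C : Set V} (hC : C.Nonempty)
    (hoff : ∀ t, ∀ u ∈ marked t, u ∉ C) {t : ℕ} {u w : V} (hu : u ∈ marked t)
    (hw : w ∉ marked t) (huw : G.Adj u w) : distToCycle G C w < distToCycle G C u := by
  induction t generalizing u w with
  | zero => simp [hM.zero] at hu
  | succ t ih =>
    have hw' : w ∉ marked t := fun h => hw (hM.mono t h)
    by_cases hold : u ∈ marked t
    · exact ih hold hw' huw
    obtain ⟨w₀, huw₀, hlt⟩ := exists_adj_distToCycle_lt hG hC (hoff _ _ hu)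
    have hw₀ : w₀ ∉ marked t := fun h => (ih h hold huw₀.symm).not_gt hlt
    rwa [hM.eq_of_adj_of_notMem hu hold huw hw' huw₀ hw₀]

end IsLeafPruning

end SimpleGraph

/-- Let `d_t(p_α, C)` be the distance between the pebble of agent `α`
and the cycle `C` at round `t`.  Then `{d_t(p_α, C)}_{t ≥ 0}` is decreasing
(`d_t ≥ d_{t+1}` for all `t`); moreover every time the pebble is moved it gets strictly
closer to `C`, and — as long as the agent keeps moving its pebble while it is off the
cycle — the pebble eventually reaches a node of `C`. -/
theorem pebble_distance_decreasing
    {V : Type} [Fintype V] [DecidableEq V]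
    (G : SimpleGraph V) [DecidableRel G.Adj] (hU : Unicyclic G)
    {v : V} (cyc : G.Walk v v) (hcyc : cyc.IsCycle)
    (C : Set V) (hC : C = {x | x ∈ cyc.support})
    (marked : ℕ → Finset V)
    (hmarked0 : marked 0 = ∅)
    (hmono : ∀ t, marked t ⊆ marked (t + 1))
    (hrule : ∀ t u, u ∈ marked (t + 1) → u ∉ marked t →
      ((G.neighborFinset u).filter (fun w => w ∉ marked t)).card ≤ 1)
    (pebble : ℕ → V)
    (hpeb : ∀ t, pebble (t + 1) = pebble t ∨
      (pebble t ∈ marked t ∧ G.Adj (pebble t) (pebble (t + 1)) ∧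
        pebble (t + 1) ∉ marked t)) :
    (∀ t, distToCycle G C (pebble (t + 1)) ≤ distToCycle G C (pebble t)) ∧
    (∀ t, pebble (t + 1) ≠ pebble t →
      distToCycle G C (pebble (t + 1)) < distToCycle G C (pebble t)) ∧
    ((∀ t, pebble t ∉ C → ∃ t', t ≤ t' ∧ pebble (t' + 1) ≠ pebble t') →
      ∃ t, pebble t ∈ C) := by
  have hM : G.IsLeafPruning marked := ⟨hmarked0, hmono, hrule⟩
  have hCne : C.Nonempty := ⟨v, hC ▸ cyc.start_mem_support⟩
  have hoff : ∀ t, ∀ u ∈ marked t, u ∉ C := fun _ _ =>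
    hM.notMem_of_forall_exists_adj_ne fun _ hu => by
      subst hC; exact hcyc.exists_adj_ne_of_mem_support hu
  have hmove : ∀ t, pebble (t + 1) ≠ pebble t →
      distToCycle G C (pebble (t + 1)) < distToCycle G C (pebble t) := fun t hne => by
    obtain ⟨hm, hadj, hnm⟩ := (hpeb t).resolve_left hne
    exact hM.distToCycle_lt hU.1 hCne hoff hm hnm hadj
  have hstep : ∀ t, distToCycle G C (pebble (t + 1)) ≤ distToCycle G C (pebble t) := fun t => by
    by_cases h : pebble (t + 1) = pebble t
    · rw [h]
    · exact (hmove t h).le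
  refine ⟨hstep, hmove, fun hfreq => ?_⟩
  obtain ⟨t, ht⟩ := Nat.exists_eq_zero_of_antitone_of_exists_lt (antitone_nat_of_succ_le hstep)
    fun t ht => by
      obtain ⟨t', htt', hne⟩ := hfreq t (mt (distToCycle_eq_zero_iff hU.1 hCne).mpr ht)
      exact ⟨t', htt', hmove t' hne⟩
  exact ⟨t, (distToCycle_eq_zero_iff hU.1 hCne).mp ht⟩
end
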